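/- In every nonempty zip tree, the rank of the root equals the maximum of the ranks of all nodes. Consequently, for any nonempty list of (rank, key) pairs with pairwise distinct keys, the rank of the root of the zip tree obtained by sequentially inserting all pairs into the empty tree equals the maximum of the ranks in the list. -/

import Mathlib

/-- Ranked binary trees: each node stores a natural-number rank and a key. -/
inductive ZTree (α : Type*) where
  | empty : ZTree α
  | node (rank : ℕ) (key : α) (left right : ZTree α) : ZTree α

namespace ZTree

/-- The rank of the root of a tree, with `rk empty = -1`. -/
def rk {α : Type*} : ZTree α → ℤ
  | .empty => -1
  | .node r _ _ _ => (r : ℤ)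

/-- The set of keys occurring in a tree. -/
def keys {α : Type*} : ZTree α → Set α
  | .empty => ∅
  | .node _ k l r => {k} ∪ l.keys ∪ r.keys

/-- The left child of a tree (the empty tree for the empty tree). -/
def left {α : Type*} : ZTree α → ZTree α
  | .empty => .empty
  | .node _ _ l _ => l

/-- The right child of a tree (the empty tree for the empty tree). -/
def right {α : Type*} : ZTree α → ZTree α
  | .empty => .empty
  | .node _ _ _ r => r

/-- The number of nodes of a tree. -/
def size {α : Type*} : ZTree α → ℕ
  | .empty => 0
  | .node _ _ l r => l.size + r.size + 1

/-- The zip tree invariant: binary-search-tree property on keys, the rank of a left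
child is strictly smaller than the rank of its parent, and the rank of a right child
is at most the rank of its parent. -/
def IsZipTree {α : Type*} [LinearOrder α] : ZTree α → Prop
  | .empty => True
  | .node rank k l r =>
      (∀ x ∈ l.keys, x < k) ∧ (∀ x ∈ r.keys, k < x) ∧
      l.rk < (rank : ℤ) ∧ r.rk ≤ (rank : ℤ) ∧ l.IsZipTree ∧ r.IsZipTree

/-- Zip-tree insertion. -/
def insert {α : Type*} [LinearOrder α] (r : ℕ) (k : α) : ZTree α → ZTree α
  | .empty => .node r k .empty .empty
  | .node rank key l rt =>
    if k = key then .node rank key l rt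
    else if k < key then
      match ZTree.insert r k l with
      | .empty => .node rank key .empty rt
      | .node tr tk tl trr =>
          if (tr : ℤ) < (rank : ℤ) then .node rank key (.node tr tk tl trr) rt
          else .node tr tk tl (.node rank key trr rt)
    else
      match ZTree.insert r k rt with
      | .empty => .node rank key l .empty
      | .node tr tk tl trr =>
          if (tr : ℤ) ≤ (rank : ℤ) then .node rank key l (.node tr tk tl trr)
          else .node tr tk (.node rank key l tl) trr

/-- Zipping two trees. -/
def zip {α : Type*} (k : α) : ZTree α → ZTree α → ZTree α
  | .empty, .empty => .empty
  | .empty, t => t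
  | t, .empty => t
  | .node r1 k1 l1 rt1, .node r2 k2 l2 rt2 =>
    if r1 < r2 then
      .node r2 k2 (ZTree.zip k (.node r1 k1 l1 rt1) l2) rt2
    else
      .node r1 k1 l1 (ZTree.zip k rt1 (.node r2 k2 l2 rt2))
  termination_by t1 t2 => t1.size + t2.size
  decreasing_by
    · simp [ZTree.size] <;> omega
    · simp [ZTree.size] <;> omega

/-- Zip-tree deletion. -/
def delete {α : Type*} [LinearOrder α] (k : α) : ZTree α → ZTree α
  | .empty => .empty
  | .node rank key l r =>
    if k < key then .node rank key (ZTree.delete k l) r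
    else if key < k then .node rank key l (ZTree.delete k r)
    else ZTree.zip k l r

end ZTree

/-- The multiset of ranks of all nodes of a tree. -/
def ZTree.ranks {α : Type*} : ZTree α → Multiset ℕ
  | .empty => 0
  | .node r _ l rt => r ::ₘ (l.ranks + rt.ranks)

/-- Sequentially insert a list of (rank, key) pairs into the empty tree. -/
def ZTree.insertList {α : Type*} [LinearOrder α] (ps : List (ℕ × α)) : ZTree α :=
  ps.foldl (fun t p => ZTree.insert p.1 p.2 t) ZTree.empty

/-!
Along every path from the root ranks never increase, so in a zip tree the root carries the
largest rank. For the trees built by `insertList` it then suffices to know that insertion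
preserves the zip-tree invariant and, for a fresh key, adds exactly one rank to the multiset of
ranks. Insertion is a recursive insertion followed by at most one rotation at each node; the
rotation is legal because inserting into a zip tree `t` leaves both children of the result with
rank at most `t.rk`.
-/

namespace ZTree

variable {α : Type*}

-- `attachLeft rank key t rt` puts `t` as the left subtree of a node `(rank, key)`, rotating the
-- root of `t` above that node when its rank is not smaller; this is one step of `insert`.
def attachLeft (rank : ℕ) (key : α) (t rt : ZTree α) : ZTree α :=
  match t with
  | .empty => .node rank key .empty rt
  | .node tr tk tl trr =>
      if (tr : ℤ) < (rank : ℤ) then .node rank key (.node tr tk tl trr) rt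
      else .node tr tk tl (.node rank key trr rt)

def attachRight (rank : ℕ) (key : α) (l t : ZTree α) : ZTree α :=
  match t with
  | .empty => .node rank key l .empty
  | .node tr tk tl trr =>
      if (tr : ℤ) ≤ (rank : ℤ) then .node rank key l (.node tr tk tl trr)
      else .node tr tk (.node rank key l tl) trr

theorem keys_attachLeft (rank : ℕ) (key : α) (t rt : ZTree α) :
    (attachLeft rank key t rt).keys = {key} ∪ t.keys ∪ rt.keys := by
  cases t with
  | empty => simp [attachLeft, keys]
  | node tr tk tl trr =>
    simp only [attachLeft]
    split_ifs
    · rfl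
    · ext x; simp only [keys, Set.mem_union, Set.mem_singleton_iff]; tauto

theorem keys_attachRight (rank : ℕ) (key : α) (l t : ZTree α) :
    (attachRight rank key l t).keys = {key} ∪ l.keys ∪ t.keys := by
  cases t with
  | empty => simp [attachRight, keys]
  | node tr tk tl trr =>
    simp only [attachRight]
    split_ifs
    · rfl
    · ext x; simp only [keys, Set.mem_union, Set.mem_singleton_iff]; tauto

theorem ranks_attachLeft (rank : ℕ) (key : α) (t rt : ZTree α) :
    (attachLeft rank key t rt).ranks = rank ::ₘ (t.ranks + rt.ranks) := by
  cases t with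
  | empty => simp [attachLeft, ranks]
  | node tr tk tl trr =>
    simp only [attachLeft]
    split_ifs
    · rfl
    · simp only [ranks, Multiset.cons_add, Multiset.add_cons, add_assoc, Multiset.cons_swap]

theorem ranks_attachRight (rank : ℕ) (key : α) (l t : ZTree α) :
    (attachRight rank key l t).ranks = rank ::ₘ (l.ranks + t.ranks) := by
  cases t with
  | empty => simp [attachRight, ranks]
  | node tr tk tl trr =>
    simp only [attachRight]
    split_ifs
    · rfl
    · simp only [ranks, Multiset.cons_add, Multiset.add_cons, add_assoc, Multiset.cons_swap]

variable [LinearOrder α]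

theorem insert_node_of_lt {r rank : ℕ} {k key : α} (h : k < key) (l rt : ZTree α) :
    insert r k (node rank key l rt) = attachLeft rank key (insert r k l) rt := by
  simp only [insert, h.ne, h, if_false, if_true]
  rfl

theorem insert_node_of_gt {r rank : ℕ} {k key : α} (h : key < k) (l rt : ZTree α) :
    insert r k (node rank key l rt) = attachRight rank key l (insert r k rt) := by
  simp only [insert, h.ne', h.not_gt, if_false]
  rfl

theorem keys_insert (r : ℕ) (k : α) (t : ZTree α) : (insert r k t).keys = {k} ∪ t.keys := by
  induction t with
  | empty => simp [insert, keys]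
  | node rank key l rt ihl ihr =>
    rcases lt_trichotomy k key with h | rfl | h
    · rw [insert_node_of_lt h, keys_attachLeft, ihl]
      ext x; simp only [keys, Set.mem_union, Set.mem_singleton_iff]; tauto
    · simp [insert, keys]
    · rw [insert_node_of_gt h, keys_attachRight, ihr]
      ext x; simp only [keys, Set.mem_union, Set.mem_singleton_iff]; tauto

theorem ranks_insert (r : ℕ) {k : α} {t : ZTree α} (hk : k ∉ t.keys) :
    (insert r k t).ranks = r ::ₘ t.ranks := by
  induction t with
  | empty => rfl
  | node rank key l rt ihl ihr =>
    simp only [keys, Set.mem_union, Set.mem_singleton_iff, not_or] at hk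
    obtain ⟨⟨hne, hl⟩, hrt⟩ := hk
    rcases lt_or_gt_of_ne hne with h | h
    · rw [insert_node_of_lt h, ranks_attachLeft, ihl hl]
      simp only [ranks, Multiset.cons_add, Multiset.cons_swap]
    · rw [insert_node_of_gt h, ranks_attachRight, ihr hrt]
      simp only [ranks, Multiset.add_cons, Multiset.cons_swap]

theorem rk_left_insert_le (r : ℕ) (k : α) {t : ZTree α} (ht : t.IsZipTree) :
    (insert r k t).left.rk ≤ t.rk := by
  induction t with
  | empty => simp [insert, left, rk]
  | node rank key l rt ihl _ =>
    obtain ⟨-, -, hl_rk, -, hl, -⟩ := ht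
    rcases lt_trichotomy k key with h | rfl | h
    · have ih := ihl hl
      rw [insert_node_of_lt h]
      cases hi : insert r k l with
      | empty => simp [attachLeft, left, rk]
      | node tr tk tl trr =>
        rw [hi, left] at ih
        simp only [attachLeft]
        split_ifs with hrot
        · exact hrot.le
        · exact ih.trans hl_rk.le
    · simpa [insert, left, rk] using hl_rk.le
    · rw [insert_node_of_gt h]
      cases insert r k rt with
      | empty => simpa [attachRight, left, rk] using hl_rk.le
      | node tr tk tl trr =>
        simp only [attachRight]
        split_ifs
        · exact hl_rk.le
        · exact le_rfl

theorem rk_right_insert_le (r : ℕ) (k : α) {t : ZTree α} (ht : t.IsZipTree) :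
    (insert r k t).right.rk ≤ t.rk := by
  induction t with
  | empty => simp [insert, right, rk]
  | node rank key l rt _ ihr =>
    obtain ⟨-, -, -, hrt_rk, -, hrt⟩ := ht
    rcases lt_trichotomy k key with h | rfl | h
    · rw [insert_node_of_lt h]
      cases insert r k l with
      | empty => simpa [attachLeft, right, rk] using hrt_rk
      | node tr tk tl trr =>
        simp only [attachLeft]
        split_ifs
        · exact hrt_rk
        · exact le_rfl
    · simpa [insert, right, rk] using hrt_rk
    · have ih := ihr hrt
      rw [insert_node_of_gt h]
      cases hi : insert r k rt with
      | empty => simp [attachRight, right, rk]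
      | node tr tk tl trr =>
        rw [hi, right] at ih
        simp only [attachRight]
        split_ifs with hrot
        · exact hrot
        · exact ih.trans hrt_rk

theorem IsZipTree.attachLeft {rank : ℕ} {key : α} {t rt : ZTree α} (ht : t.IsZipTree)
    (hrt : rt.IsZipTree) (ht_keys : ∀ x ∈ t.keys, x < key) (hrt_keys : ∀ x ∈ rt.keys, key < x)
    (hrt_rk : rt.rk ≤ rank) (ht_right : t.right.rk < rank) :
    (attachLeft rank key t rt).IsZipTree := by
  cases t with
  | empty => exact ⟨by simp [keys], hrt_keys, ht_right, hrt_rk, trivial, hrt⟩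
  | node tr tk tl trr =>
    simp only [ZTree.attachLeft]
    split_ifs with hrot
    · exact ⟨ht_keys, hrt_keys, hrot, hrt_rk, ht, hrt⟩
    · obtain ⟨htl_keys, htrr_keys, htl_rk, -, htl, htrr⟩ := ht
      have htk : tk < key := ht_keys tk (by simp [keys])
      refine ⟨htl_keys, ?_, htl_rk, by simp only [rk] at hrot ⊢; omega, htl,
        ⟨fun x hx => ht_keys x (by simp [keys, hx]), hrt_keys, ht_right, hrt_rk, htrr, hrt⟩⟩
      simp only [keys, Set.mem_union, Set.mem_singleton_iff]
      rintro x ((rfl | hx) | hx)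
      exacts [htk, htrr_keys x hx, htk.trans (hrt_keys x hx)]

theorem IsZipTree.attachRight {rank : ℕ} {key : α} {l t : ZTree α} (hl : l.IsZipTree)
    (ht : t.IsZipTree) (hl_keys : ∀ x ∈ l.keys, x < key) (ht_keys : ∀ x ∈ t.keys, key < x)
    (hl_rk : l.rk < rank) (ht_left : t.left.rk ≤ rank) :
    (attachRight rank key l t).IsZipTree := by
  cases t with
  | empty => exact ⟨hl_keys, by simp [keys], hl_rk, by simp [rk], hl, trivial⟩
  | node tr tk tl trr =>
    simp only [ZTree.attachRight]
    split_ifs with hrot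
    · exact ⟨hl_keys, ht_keys, hl_rk, hrot, hl, ht⟩
    · obtain ⟨htl_keys, htrr_keys, -, htrr_rk, htl, htrr⟩ := ht
      have htk : key < tk := ht_keys tk (by simp [keys])
      refine ⟨?_, htrr_keys, by simp only [rk] at hrot ⊢; omega, htrr_rk,
        ⟨hl_keys, fun x hx => ht_keys x (by simp [keys, hx]), hl_rk, ht_left, hl, htl⟩, htrr⟩
      simp only [keys, Set.mem_union, Set.mem_singleton_iff]
      rintro x ((rfl | hx) | hx)
      exacts [htk, (hl_keys x hx).trans htk, htl_keys x hx]

theorem IsZipTree.insert (r : ℕ) (k : α) {t : ZTree α} (ht : t.IsZipTree) :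
    (t.insert r k).IsZipTree := by
  induction t with
  | empty =>
    exact ⟨by simp [keys], by simp [keys], by simp only [rk]; omega, by simp [rk], trivial, trivial⟩
  | node rank key l rt ihl ihr =>
    rcases lt_trichotomy k key with h | rfl | h
    · obtain ⟨hl_keys, hrt_keys, hl_rk, hrt_rk, hl, hrt⟩ := ht
      rw [insert_node_of_lt h]
      refine (ihl hl).attachLeft hrt ?_ hrt_keys hrt_rk
        ((rk_right_insert_le r k hl).trans_lt hl_rk)
      rw [keys_insert]
      rintro x (rfl | hx)
      exacts [h, hl_keys x hx]
    · simpa [ZTree.insert] using ht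
    · obtain ⟨hl_keys, hrt_keys, hl_rk, hrt_rk, hl, hrt⟩ := ht
      rw [insert_node_of_gt h]
      refine hl.attachRight (ihr hrt) hl_keys ?_ hl_rk
        ((rk_left_insert_le r k hrt).trans hrt_rk)
      rw [keys_insert]
      rintro x (rfl | hx)
      exacts [h, hrt_keys x hx]

theorem IsZipTree.le_rk_of_mem_ranks {t : ZTree α} (ht : t.IsZipTree) {n : ℕ}
    (hn : n ∈ t.ranks) : (n : ℤ) ≤ t.rk := by
  induction t with
  | empty => simp [ranks] at hn
  | node rank key l rt ihl ihr =>
    obtain ⟨-, -, hl_rk, hrt_rk, hl, hrt⟩ := ht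
    simp only [ranks, Multiset.mem_cons, Multiset.mem_add] at hn
    rcases hn with rfl | hn | hn
    · exact le_rfl
    · exact (ihl hl hn).trans hl_rk.le
    · exact (ihr hrt hn).trans hrt_rk

theorem IsZipTree.rk_eq_sup {t : ZTree α} (ht : t.IsZipTree) (hne : t ≠ empty) :
    t.rk = (t.ranks.sup : ℤ) := by
  cases t with
  | empty => exact absurd rfl hne
  | node rank key l rt =>
    have hsup : (node rank key l rt).ranks.sup ≤ rank :=
      Multiset.sup_le.mpr fun n hn => by simpa [rk] using ht.le_rk_of_mem_ranks hn
    have : rank ≤ (node rank key l rt).ranks.sup := Multiset.le_sup (by simp [ranks])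
    simp only [rk]
    omega

theorem IsZipTree.foldl_insert (ps : List (ℕ × α)) {t : ZTree α} (ht : t.IsZipTree) :
    (ps.foldl (fun t p => ZTree.insert p.1 p.2 t) t).IsZipTree := by
  induction ps generalizing t with
  | nil => exact ht
  | cons p ps ih => exact ih (ht.insert p.1 p.2)

theorem ranks_foldl_insert (ps : List (ℕ × α)) {t : ZTree α}
    (hfresh : ∀ p ∈ ps, p.2 ∉ t.keys) (hnd : (ps.map Prod.snd).Nodup) :
    (ps.foldl (fun t p => insert p.1 p.2 t) t).ranks =
      t.ranks + (ps.map Prod.fst : List ℕ) := by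
  induction ps generalizing t with
  | nil => simp
  | cons p ps ih =>
    rw [List.map_cons, List.nodup_cons] at hnd
    have hfresh' : ∀ q ∈ ps, q.2 ∉ (insert p.1 p.2 t).keys := by
      intro q hq
      rw [keys_insert]
      rintro (hqp | hqt)
      · exact hnd.1 (hqp ▸ List.mem_map_of_mem hq)
      · exact hfresh q (List.mem_cons_of_mem p hq) hqt
    rw [List.foldl_cons, ih hfresh' hnd.2, ranks_insert p.1 (hfresh p List.mem_cons_self),
      List.map_cons, ← Multiset.cons_coe, Multiset.add_cons, Multiset.cons_add]

theorem isZipTree_insertList (ps : List (ℕ × α)) : (insertList ps).IsZipTree :=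
  IsZipTree.foldl_insert ps trivial

theorem ranks_insertList {ps : List (ℕ × α)} (hnd : (ps.map Prod.snd).Nodup) :
    (insertList ps).ranks = (ps.map Prod.fst : List ℕ) := by
  simpa [insertList, ranks] using ranks_foldl_insert ps (t := empty) (by simp [keys]) hnd

end ZTree

theorem root_rank_eq_max {α : Type*} [LinearOrder α] :
    (∀ (rank : ℕ) (key : α) (l r : ZTree α),
        (ZTree.node rank key l r).IsZipTree →
        rank = (ZTree.node rank key l r).ranks.sup) ∧
    (∀ ps : List (ℕ × α), ps ≠ [] → (ps.map Prod.snd).Nodup →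
        (ZTree.insertList ps).rk = (((ps.map Prod.fst).foldr max 0 : ℕ) : ℤ)) := by
  refine ⟨fun rank key l r ht => ?_, fun ps hps hnd => ?_⟩
  · simpa [ZTree.rk] using ht.rk_eq_sup (by simp)
  · have hranks := ZTree.ranks_insertList hnd
    have hne : ZTree.insertList ps ≠ .empty := fun h =>
      hps (by simpa [h, ZTree.ranks] using hranks.symm)
    rw [(ZTree.isZipTree_insertList ps).rk_eq_sup hne, hranks, Multiset.sup_coe]
    rfl
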